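/- Let X = {1/n : n ∈ ℕ} ∪ {0} ⊆ ℝ with the subspace topology. Define maps f_0, f_1, f_2 : X → X by: f_i(0) = 0 and f_i(1) = 1 for all i; f_0(1/(n+1)) = 1/n for n ≥ 1; f_1(1/(2n+1)) = 1/(2n) and f_1(1/(2n)) = 1/(2n+1) for n ≥ 1; f_2(1/4) = 1/2, f_2(1/2) = 1/3, f_2(1/(2n+1)) = 1/(2n+2) for n ≥ 1 and f_2(1/(2n+2)) = 1/(2n+1) for n ≥ 2. Then: (a) for every n ≥ 2 the point x = 1/n has dense forward orbit, i.e., {f_u(x) : u a finite word over {0,1,2}} is dense in X; but (b) for every finite word u over {0,1,2}, f_u(1) ≠ 1/2. In particular the IFS (X, {f_0, f_1, f_2}, full shift) is point transitive but not topologically transitive. -/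
import Mathlib


/-- `applyWord F u x` is `f_u(x) = f_{u_n} ∘ ⋯ ∘ f_{u_1} (x)` for the word `u = u_1 ⋯ u_n`. -/
def applyWord {X : Type*} {k : ℕ} (F : Fin k → X → X) : List (Fin k) → X → X
  | [], x => x
  | a :: u, x => applyWord F u (F a x)

lemma applyWord_append {X : Type*} {k : ℕ} (F : Fin k → X → X) (u v : List (Fin k)) (x : X) :
    applyWord F (u ++ v) x = applyWord F v (applyWord F u x) := by
  induction u generalizing x with
  | nil => rfl
  | cons a u ih => simp [applyWord, ih]

lemma applyWord_fixed {X : Type*} {k : ℕ} (F : Fin k → X → X) {x : X}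
    (h : ∀ i, F i x = x) : ∀ u : List (Fin k), applyWord F u x = x := by
  intro u
  induction u with
  | nil => rfl
  | cons a u ih => simp [applyWord, h, ih]

/-- The IFS on `X = {1/n : n ∈ ℕ} ∪ {0}` of Example `P.T not T.T`: every `1/n` (`n ≥ 2`) has
dense forward orbit (point transitivity), yet no word maps `1` to `1/2` (so the IFS is not
topologically transitive, `{1}` and `{1/2}` being open in `X`). -/
theorem stmt13 (X : Set ℝ)
    (hX : X = insert (0 : ℝ) {x : ℝ | ∃ n : ℕ, 1 ≤ n ∧ x = 1 / (n : ℝ)})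
    (f : Fin 3 → ℝ → ℝ)
    (hf_zero : ∀ i, f i 0 = 0) (hf_one : ∀ i, f i 1 = 1)
    (hf0 : ∀ n : ℕ, 1 ≤ n → f 0 (1 / ((n : ℝ) + 1)) = 1 / (n : ℝ))
    (hf1odd : ∀ n : ℕ, 1 ≤ n → f 1 (1 / (2 * (n : ℝ) + 1)) = 1 / (2 * (n : ℝ)))
    (hf1even : ∀ n : ℕ, 1 ≤ n → f 1 (1 / (2 * (n : ℝ))) = 1 / (2 * (n : ℝ) + 1))
    (hf2a : f 2 (1 / 4) = 1 / 2) (hf2b : f 2 (1 / 2) = 1 / 3)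
    (hf2odd : ∀ n : ℕ, 1 ≤ n → f 2 (1 / (2 * (n : ℝ) + 1)) = 1 / (2 * (n : ℝ) + 2))
    (hf2even : ∀ n : ℕ, 2 ≤ n → f 2 (1 / (2 * (n : ℝ) + 2)) = 1 / (2 * (n : ℝ) + 1)) :
    (∀ n : ℕ, 2 ≤ n →
      X ⊆ closure {y : ℝ | ∃ u : List (Fin 3), applyWord f u (1 / (n : ℝ)) = y}) ∧
    ∀ u : List (Fin 3), applyWord f u 1 ≠ 1 / 2 := by
  -- from 1/n (n ≥ 2) we can reach 1/2
  have toHalf : ∀ n : ℕ, 2 ≤ n → ∃ u : List (Fin 3), applyWord f u (1 / (n : ℝ)) = 1 / 2 := by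
    intro n hn
    induction n, hn using Nat.le_induction with
    | base => exact ⟨[], by norm_num [applyWord]⟩
    | succ n hn ih =>
      obtain ⟨u, hu⟩ := ih
      refine ⟨0 :: u, ?_⟩
      have h0 : f 0 (1 / ((n : ℝ) + 1)) = 1 / (n : ℝ) := hf0 n (by omega)
      simp only [applyWord]
      rw [show ((n + 1 : ℕ) : ℝ) = (n : ℝ) + 1 by push_cast; ring, h0, hu]
  -- from 1/2 we can reach 1/m for any m ≥ 2
  have fromHalf : ∀ m : ℕ, 2 ≤ m → ∃ u : List (Fin 3), applyWord f u (1 / 2) = 1 / (m : ℝ) := by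
    intro m hm
    induction m, hm using Nat.le_induction with
    | base => exact ⟨[], by norm_num [applyWord]⟩
    | succ m hm ih =>
      obtain ⟨u, hu⟩ := ih
      rcases Nat.even_or_odd m with ⟨k, hk⟩ | ⟨k, hk⟩
      · -- m = 2k, k ≥ 1, apply f 1
        have hk1 : 1 ≤ k := by omega
        refine ⟨u ++ [1], ?_⟩
        rw [applyWord_append, hu]
        show f 1 (1 / (m : ℝ)) = 1 / ((m + 1 : ℕ) : ℝ)
        have := hf1even k hk1
        rw [show (m : ℝ) = 2 * (k : ℝ) by push_cast [hk]; ring, this]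
        push_cast [hk]; ring_nf
      · -- m = 2k+1, k ≥ 1, apply f 2
        have hk1 : 1 ≤ k := by omega
        refine ⟨u ++ [2], ?_⟩
        rw [applyWord_append, hu]
        show f 2 (1 / (m : ℝ)) = 1 / ((m + 1 : ℕ) : ℝ)
        have := hf2odd k hk1
        rw [show (m : ℝ) = 2 * (k : ℝ) + 1 by push_cast [hk]; ring, this]
        push_cast [hk]; ring_nf
  -- key: from 1/n reach 1/m for all m ≥ 1
  have key : ∀ n : ℕ, 2 ≤ n → ∀ m : ℕ, 1 ≤ m →
      ∃ u : List (Fin 3), applyWord f u (1 / (n : ℝ)) = 1 / (m : ℝ) := by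
    intro n hn m hm
    obtain ⟨u, hu⟩ := toHalf n hn
    rcases Nat.lt_or_ge m 2 with h | h
    · -- m = 1 : go to 1/2 then apply f 0
      have hm1 : m = 1 := by omega
      refine ⟨u ++ [0], ?_⟩
      rw [applyWord_append, hu]
      show f 0 (1 / 2) = 1 / ((m : ℕ) : ℝ)
      have := hf0 1 le_rfl
      norm_num at this
      rw [show (1/2 : ℝ) = 1 / ((1:ℝ) + 1) by norm_num] at *
      subst hm1; norm_num
      rw [show ((1:ℝ)+1) = 2 by norm_num] at this
      linarith [this]
    · obtain ⟨v, hv⟩ := fromHalf m h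
      exact ⟨u ++ v, by rw [applyWord_append, hu, hv]⟩
  constructor
  · intro n hn x hx
    rw [hX] at hx
    rcases hx with rfl | ⟨m, hm, rfl⟩
    · -- x = 0 : limit of 1/m
      refine mem_closure_of_tendsto tendsto_one_div_atTop_nhds_zero_nat ?_
      filter_upwards [Filter.eventually_ge_atTop 1] with m hm
      exact key n hn m hm
    · exact subset_closure (key n hn m hm)
  · intro u
    rw [applyWord_fixed f hf_one u]
    norm_num
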